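/- arXiv:1806.07192 — 10 statements merged into one kernel-verified Lean document; each statement's English description precedes it below -/
import Mathlib

section
/- Let q ≥ 2 and n ≥ 2 be integers and let m be an integer with n ≤ m and m < (n−1) + (n−1)·ln(q−1)/(ln q − ln(q−1)). Consider the real polynomial p(X) = X^m − q·X^{m−1} + q^{m−n}. Then p has a real root μ with q−1 < μ < q; this root is simple (p'(μ) ≠ 0); it is the unique root of p in the interval (q−1, q); and every complex root z of p with z ≠ μ satisfies |z| < μ. -/
/-!
Write `p(x) = x^d (x - q) + k` with `d = m - 1` and `k = q^(m-n)`. The hypothesis on `m` says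
exactly that `q^(m-n+1) < (q-1)^m`, i.e. `p(q-1) = k - (q-1)^d < 0 < k = p(q)`, so `p` has a root
`μ ∈ (q-1, q)`. Since `x p'(x) = x^d ((d+1) x - q d)`, `p` decreases on `[0, c]` and increases on
`[c, ∞)` for `c = q d / (d+1)`; as `p(q-1) < 0`, every root in `(q-1, q)` exceeds `c`, which gives
uniqueness and simplicity. For another complex root `z`, factoring `p(z) - p(μ)` yields
`z^d = (q-μ) ∑_{i<d} z^i μ^(d-1-i)`, so `|z| ≥ μ` would force `|z| ≤ (q-μ) d`, while `μ > c`
means exactly `(q-μ) d < μ`.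
-/

open Real Set Finset

def charTrinomial {R : Type*} [CommRing R] (a b : R) (d : ℕ) (x : R) : R :=
  x ^ (d + 1) - a * x ^ d + b

section Algebra

variable {R : Type*} [CommRing R]

theorem charTrinomial_self (a b : R) (d : ℕ) : charTrinomial a b d a = b := by
  rw [charTrinomial, pow_succ']; ring

theorem charTrinomial_sub_one (a b : R) (d : ℕ) :
    charTrinomial a b d (a - 1) = b - (a - 1) ^ d := by
  rw [charTrinomial, pow_succ]; ring

theorem charTrinomial_sub_charTrinomial (a b x y : R) (d : ℕ) :
    charTrinomial a b d x - charTrinomial a b d y =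
      (x - y) * (x ^ d - (a - y) * ∑ i ∈ range d, x ^ i * y ^ (d - 1 - i)) := by
  have hgeom := geom_sum₂_mul x y d
  rw [charTrinomial, charTrinomial, pow_succ, pow_succ]
  linear_combination (a - y) * hgeom

end Algebra

theorem norm_geom_sum₂_le {K : Type*} [NormedDivisionRing K] {x y : K} (hxy : ‖y‖ ≤ ‖x‖)
    (d : ℕ) : ‖∑ i ∈ range d, x ^ i * y ^ (d - 1 - i)‖ ≤ d * ‖x‖ ^ (d - 1) := by
  calc ‖∑ i ∈ range d, x ^ i * y ^ (d - 1 - i)‖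
      ≤ ∑ i ∈ range d, ‖x ^ i * y ^ (d - 1 - i)‖ := norm_sum_le _ _
    _ ≤ ∑ _i ∈ range d, ‖x‖ ^ (d - 1) := by
      refine sum_le_sum fun i hi => ?_
      rw [norm_mul, norm_pow, norm_pow]
      calc ‖x‖ ^ i * ‖y‖ ^ (d - 1 - i) ≤ ‖x‖ ^ i * ‖x‖ ^ (d - 1 - i) := by gcongr
        _ = ‖x‖ ^ (d - 1) := by
          rw [← pow_add, Nat.add_sub_cancel' (Nat.le_sub_one_of_lt (mem_range.1 hi))]
    _ = d * ‖x‖ ^ (d - 1) := by rw [sum_const, card_range, nsmul_eq_mul]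

section Dominance

variable {K : Type*} [NormedField K] {a b z μ : K} {d : ℕ}

theorem norm_le_of_charTrinomial_eq_zero (hμ : charTrinomial a b d μ = 0)
    (hz : charTrinomial a b d z = 0) (hzμ : z ≠ μ) (hμz : ‖μ‖ ≤ ‖z‖) :
    ‖z‖ ≤ ‖a - μ‖ * d := by
  have hfactor := charTrinomial_sub_charTrinomial a b z μ d
  rw [hμ, hz, sub_zero, eq_comm, mul_eq_zero, sub_eq_zero, sub_eq_zero] at hfactor
  have hpow : z ^ d = (a - μ) * ∑ i ∈ range d, z ^ i * μ ^ (d - 1 - i) :=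
    hfactor.resolve_left hzμ
  obtain _ | e := d
  · simp at hpow
  have hz0 : 0 < ‖z‖ := by
    by_contra! h
    have hμ0 : μ = 0 := norm_le_zero_iff.1 (hμz.trans h)
    exact hzμ (by rw [norm_le_zero_iff.1 h, hμ0])
  have hbound : ‖z‖ ^ e * ‖z‖ ≤ ‖z‖ ^ e * (‖a - μ‖ * (e + 1 : ℕ)) := by
    calc ‖z‖ ^ e * ‖z‖ = ‖a - μ‖ * ‖∑ i ∈ range (e + 1), z ^ i * μ ^ (e + 1 - 1 - i)‖ := by
          rw [← pow_succ, ← norm_pow, hpow, norm_mul]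
      _ ≤ ‖a - μ‖ * ((e + 1 : ℕ) * ‖z‖ ^ (e + 1 - 1)) := by
          gcongr; exact norm_geom_sum₂_le hμz _
      _ = ‖z‖ ^ e * (‖a - μ‖ * (e + 1 : ℕ)) := by rw [Nat.add_sub_cancel]; ring
  exact le_of_mul_le_mul_left hbound (pow_pos hz0 e)

theorem norm_lt_of_charTrinomial_eq_zero (hμa : ‖a - μ‖ * d < ‖μ‖)
    (hμ : charTrinomial a b d μ = 0) (hz : charTrinomial a b d z = 0) (hzμ : z ≠ μ) :
    ‖z‖ < ‖μ‖ := by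
  by_contra! hμz
  exact (norm_le_of_charTrinomial_eq_zero hμ hz hzμ hμz).not_gt (hμa.trans_le hμz)

end Dominance

@[simp, norm_cast]
theorem ofReal_charTrinomial (a b x : ℝ) (d : ℕ) :
    ((charTrinomial a b d x : ℝ) : ℂ) = charTrinomial (a : ℂ) b d x := by
  simp [charTrinomial]

theorem norm_lt_of_charTrinomial_eq_zero_of_lt {a μ : ℝ} {b z : ℂ} {d : ℕ}
    (hμc : a * d / (d + 1) < μ) (hμa : μ ≤ a) (hμ : charTrinomial (a : ℂ) b d μ = 0)
    (hz : charTrinomial (a : ℂ) b d z = 0) (hzμ : z ≠ μ) : ‖z‖ < μ := by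
  rw [div_lt_iff₀ (by positivity)] at hμc
  have hμ₀ : 0 < μ := by nlinarith
  have hdist : ‖(a : ℂ) - μ‖ = a - μ := by
    rw [← Complex.ofReal_sub, Complex.norm_real, Real.norm_of_nonneg (sub_nonneg.2 hμa)]
  have hμa' : ‖(a : ℂ) - μ‖ * d < ‖(μ : ℂ)‖ := by
    rw [hdist, Complex.norm_real, Real.norm_of_nonneg hμ₀.le]
    linarith
  simpa [Real.norm_of_nonneg hμ₀.le] using norm_lt_of_charTrinomial_eq_zero hμa' hμ hz hzμ

section Calculus

variable {𝕜 : Type*} [NontriviallyNormedField 𝕜]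

theorem hasDerivAt_charTrinomial (a b x : 𝕜) (d : ℕ) :
    HasDerivAt (charTrinomial a b d) ((d + 1 : ℕ) * x ^ d - a * (d * x ^ (d - 1))) x :=
  (((hasDerivAt_pow (d + 1) x).sub ((hasDerivAt_pow d x).const_mul a)).add_const b)

theorem mul_deriv_charTrinomial (a b x : 𝕜) (d : ℕ) :
    x * deriv (charTrinomial a b d) x = x ^ d * ((d + 1) * x - a * d) := by
  rw [(hasDerivAt_charTrinomial a b x d).deriv]
  cases d with
  | zero => simp
  | succ e => push_cast; ring

end Calculus

section Real

variable {a b x : ℝ} {d : ℕ}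

theorem deriv_charTrinomial_pos (hx : a * d / (d + 1) < x) (hx₀ : 0 < x) :
    0 < deriv (charTrinomial a b d) x := by
  refine pos_of_mul_pos_right (a := x) ?_ hx₀.le
  rw [mul_deriv_charTrinomial, div_lt_iff₀ (by positivity)] at *
  exact mul_pos (pow_pos hx₀ d) (by linarith)

theorem deriv_charTrinomial_neg (hx : x < a * d / (d + 1)) (hx₀ : 0 < x) :
    deriv (charTrinomial a b d) x < 0 := by
  refine neg_of_mul_neg_right (a := x) ?_ hx₀.le
  rw [mul_deriv_charTrinomial, lt_div_iff₀ (by positivity)] at *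
  exact mul_neg_of_pos_of_neg (pow_pos hx₀ d) (by linarith)

theorem continuous_charTrinomial (a b : ℝ) (d : ℕ) : Continuous (charTrinomial a b d) := by
  unfold charTrinomial; fun_prop

theorem strictMonoOn_charTrinomial (ha : 0 ≤ a) :
    StrictMonoOn (charTrinomial a b d) (Ici (a * d / (d + 1))) := by
  refine strictMonoOn_of_deriv_pos (convex_Ici _) (continuous_charTrinomial a b d).continuousOn
    fun x hx => ?_
  rw [interior_Ici] at hx
  exact deriv_charTrinomial_pos hx ((by positivity : 0 ≤ a * d / (d + 1)).trans_lt hx)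

theorem strictAntiOn_charTrinomial :
    StrictAntiOn (charTrinomial a b d) (Icc 0 (a * d / (d + 1))) := by
  refine strictAntiOn_of_deriv_neg (convex_Icc _ _) (continuous_charTrinomial a b d).continuousOn
    fun x hx => ?_
  rw [interior_Icc] at hx
  exact deriv_charTrinomial_neg hx.2 hx.1

theorem lt_of_charTrinomial_eq_zero {x₀ : ℝ} (hx₀ : 0 ≤ x₀) (hneg : charTrinomial a b d x₀ < 0)
    (hx : x₀ < x) (hroot : charTrinomial a b d x = 0) : a * d / (d + 1) < x := by
  by_contra! hxc
  have := strictAntiOn_charTrinomial (b := b) ⟨hx₀, hx.le.trans hxc⟩ ⟨hx₀.trans hx.le, hxc⟩ hx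
  linarith

end Real

theorem sub_mul_log_lt_mul_log {r s x y : ℝ} (hr : 0 < r) (hrs : r < s)
    (h : x < y + y * log r / (log s - log r)) : (x - y) * log s < x * log r := by
  have hlog : 0 < log s - log r := sub_pos.2 (log_lt_log hr hrs)
  have h' : (x - y) * (log s - log r) < y * log r :=
    (lt_div_iff₀ hlog).1 (by linarith)
  linear_combination h'

theorem pow_sub_lt_sub_one_pow {q : ℝ} {n m : ℕ} (hq : 1 < q) (hn : 1 ≤ n) (hnm : n ≤ m)
    (hm : (m : ℝ) < (n - 1) + (n - 1) * log (q - 1) / (log q - log (q - 1))) :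
    q ^ (m - n) < (q - 1) ^ (m - 1) := by
  have hq₀ : 0 < q - 1 := sub_pos.2 hq
  have hlog := sub_mul_log_lt_mul_log hq₀ (sub_one_lt q) hm
  have hpow : q ^ (m - n + 1) < (q - 1) ^ m := by
    rw [← log_lt_log_iff (by positivity) (by positivity), log_pow, log_pow]
    push_cast [Nat.cast_sub hnm]
    linarith
  rw [pow_succ, ← pow_sub_one_mul (by omega : m ≠ 0)] at hpow
  refine lt_of_mul_lt_mul_right (hpow.trans_le ?_) (by positivity : (0 : ℝ) ≤ q)
  gcongr
  linarith

/-- For integers `q ≥ 2`, `n ≥ 2` and `n ≤ m` with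
`m < (n-1) + (n-1)·ln(q-1)/(ln q - ln(q-1))`, the polynomial
`p(X) = X^m - q·X^{m-1} + q^{m-n}` has a simple real root `μ ∈ (q-1, q)`,
unique in that interval, and every other complex root has modulus `< μ`. -/
theorem stmt_0 (q n m : ℕ) (hq : 2 ≤ q) (hn : 2 ≤ n) (hnm : n ≤ m)
    (hm : (m : ℝ) < ((n : ℝ) - 1) +
      ((n : ℝ) - 1) * Real.log ((q : ℝ) - 1) /
        (Real.log (q : ℝ) - Real.log ((q : ℝ) - 1))) :
    ∃ μ : ℝ, ((q : ℝ) - 1 < μ ∧ μ < q) ∧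
      (μ ^ m - (q : ℝ) * μ ^ (m - 1) + (q : ℝ) ^ (m - n) = 0) ∧
      (deriv (fun x : ℝ => x ^ m - (q : ℝ) * x ^ (m - 1) + (q : ℝ) ^ (m - n)) μ ≠ 0) ∧
      (∀ x : ℝ, (q : ℝ) - 1 < x → x < q →
        x ^ m - (q : ℝ) * x ^ (m - 1) + (q : ℝ) ^ (m - n) = 0 → x = μ) ∧
      (∀ z : ℂ, z ^ m - (q : ℂ) * z ^ (m - 1) + (q : ℂ) ^ (m - n) = 0 →
        z ≠ (μ : ℂ) → ‖z‖ < μ) := by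
  obtain ⟨d, rfl⟩ : ∃ d, m = d + 1 := ⟨m - 1, by omega⟩
  simp only [Nat.add_sub_cancel]
  have hq₁ : (1 : ℝ) < q := by exact_mod_cast hq
  have hneg : charTrinomial (q : ℝ) (q ^ (d + 1 - n)) d (q - 1) < 0 := by
    rw [charTrinomial_sub_one, sub_neg]
    simpa using pow_sub_lt_sub_one_pow hq₁ (by omega) hnm hm
  obtain ⟨μ, ⟨hμ₁, hμ₂⟩, hμ⟩ := intermediate_value_Ioo (sub_one_lt (q : ℝ)).le
    (continuous_charTrinomial _ _ d).continuousOn ⟨hneg, by rw [charTrinomial_self]; positivity⟩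
  have hroot : ∀ x, (q : ℝ) - 1 < x → charTrinomial (q : ℝ) (q ^ (d + 1 - n)) d x = 0 →
      q * d / (d + 1) < x :=
    fun x hx => lt_of_charTrinomial_eq_zero (by linarith) hneg hx
  have hμc := hroot μ hμ₁ hμ
  refine ⟨μ, ⟨hμ₁, hμ₂⟩, hμ, (deriv_charTrinomial_pos hμc (by linarith)).ne',
    fun x hx₁ _ hx => ?_, fun z hz hzμ => ?_⟩
  · exact (strictMonoOn_charTrinomial (by positivity)).injOn (hroot x hx₁ hx).le hμc.le
      (hx.trans hμ.symm)
  · rw [← Complex.ofReal_natCast] at hz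
    refine norm_lt_of_charTrinomial_eq_zero_of_lt hμc hμ₂.le ?_ hz hzμ
    rw [← Complex.ofReal_pow, ← ofReal_charTrinomial, hμ, Complex.ofReal_zero]
end

section
/- Let q ≥ 2 and n ≥ 2 be integers and let m be an integer with n ≤ m and m < (n−1) + (n−1)·ln(q−1)/(ln q − ln(q−1)). Then the real polynomial p(X) = X^m − q·X^{m−1} + q^{m−n} has exactly two positive real roots: there exist real numbers μ′ and μ with 0 < μ′ < q−1 < μ < q such that p(μ′) = 0, p(μ) = 0, and every positive real root of p equals μ′ or μ. -/
/-!
Write `p(x) = x^{m-1} (x - q) + k` with `k = q^{m-n}`. On `x ≥ 0` its derivative has the sign of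
`m x - (m-1) q`, so `p` decreases and then increases: it has at most one positive root on each side
of its minimum. Since `p(0) = p(q) = k > 0`, there is a root on each side of `q - 1` as soon as
`p(q-1) = k - (q-1)^{m-1} < 0`, and the hypothesis on `m` is, after taking logarithms,
`q^{m-n+1} < (q-1)^m`, which is stronger.
-/

open Set Real

theorem exists_two_zeros_of_strictAntiOn_of_strictMonoOn {f : ℝ → ℝ} {a b c d : ℝ}
    (hf : ContinuousOn f (Icc a d)) (hanti : StrictAntiOn f (Icc a c))
    (hmono : StrictMonoOn f (Ici c)) (hab : a < b) (hbd : b < d)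
    (ha : 0 < f a) (hb : f b < 0) (hd : 0 < f d) :
    ∃ x y, a < x ∧ x < b ∧ b < y ∧ y < d ∧ f x = 0 ∧ f y = 0 ∧
      ∀ z, a ≤ z → f z = 0 → z = x ∨ z = y := by
  obtain ⟨x, ⟨hax, hxb⟩, hx⟩ := intermediate_value_Ioo' hab.le
    (hf.mono (Icc_subset_Icc_right hbd.le)) ⟨hb, ha⟩
  obtain ⟨y, ⟨hby, hyd⟩, hy⟩ := intermediate_value_Ioo hbd.le
    (hf.mono (Icc_subset_Icc_left hab.le)) ⟨hb, hd⟩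
  have hxc : x ≤ c := by
    by_contra! hcx
    linarith [hmono hcx.le (hcx.trans hxb).le hxb]
  have hcy : c ≤ y := by
    by_contra! hyc
    linarith [hanti ⟨hab.le, (hby.trans hyc).le⟩ ⟨(hab.trans hby).le, hyc.le⟩ hby]
  refine ⟨x, y, hax, hxb, hby, hyd, hx, hy, fun z haz hz => ?_⟩
  rcases le_total z c with hzc | hcz
  · exact .inl (hanti.injOn ⟨haz, hzc⟩ ⟨hax.le, hxc⟩ (hz.trans hx.symm))
  · exact .inr (hmono.injOn hcz hcy (hz.trans hy.symm))

section PowSuccSubMulPow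

variable (Q k : ℝ) (j : ℕ)

theorem hasDerivAt_pow_succ_sub_mul_pow (x : ℝ) :
    HasDerivAt (fun x => x ^ (j + 1) - Q * x ^ j + k)
      ((j + 1) * x ^ j - Q * (j * x ^ (j - 1))) x := by
  have h := ((hasDerivAt_pow (j + 1) x).sub ((hasDerivAt_pow j x).const_mul Q)).add_const k
  simpa using h

theorem mul_deriv_pow_succ_sub_mul_pow (x : ℝ) :
    x * ((j + 1) * x ^ j - Q * (j * x ^ (j - 1))) = x ^ j * ((j + 1) * x - j * Q) := by
  cases j <;> simp [pow_succ]; ring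

theorem strictAntiOn_pow_succ_sub_mul_pow :
    StrictAntiOn (fun x => x ^ (j + 1) - Q * x ^ j + k) (Icc 0 (j * Q / (j + 1))) := by
  refine strictAntiOn_of_deriv_neg (convex_Icc _ _) (by fun_prop) fun x hx => ?_
  rw [interior_Icc] at hx
  rw [(hasDerivAt_pow_succ_sub_mul_pow Q k j x).deriv]
  have hxQ : (j + 1) * x < j * Q := by
    have := hx.2
    rwa [lt_div_iff₀ (by positivity), mul_comm] at this
  refine neg_of_mul_neg_right ?_ hx.1.le
  rw [mul_deriv_pow_succ_sub_mul_pow]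
  exact mul_neg_of_pos_of_neg (pow_pos hx.1 j) (by linarith)

theorem strictMonoOn_pow_succ_sub_mul_pow (hQ : 0 ≤ Q) :
    StrictMonoOn (fun x => x ^ (j + 1) - Q * x ^ j + k) (Ici (j * Q / (j + 1))) := by
  refine strictMonoOn_of_deriv_pos (convex_Ici _) (by fun_prop) fun x hx => ?_
  rw [interior_Ici, mem_Ioi] at hx
  rw [(hasDerivAt_pow_succ_sub_mul_pow Q k j x).deriv]
  have hx0 : 0 < x := lt_of_le_of_lt (by positivity) hx
  have hxQ : j * Q < (j + 1) * x := by
    rw [div_lt_iff₀ (by positivity)] at hx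
    linarith
  refine pos_of_mul_pos_right ?_ hx0.le
  rw [mul_deriv_pow_succ_sub_mul_pow]
  exact mul_pos (pow_pos hx0 j) (by linarith)

theorem exists_two_pos_roots_pow_succ_sub_mul_pow (hj : j ≠ 0) (hQ : 1 < Q) (hk : 0 < k)
    (hkQ : k < (Q - 1) ^ j) :
    ∃ μ' μ : ℝ, 0 < μ' ∧ μ' < Q - 1 ∧ Q - 1 < μ ∧ μ < Q ∧
      μ' ^ (j + 1) - Q * μ' ^ j + k = 0 ∧ μ ^ (j + 1) - Q * μ ^ j + k = 0 ∧
      ∀ x : ℝ, 0 < x → x ^ (j + 1) - Q * x ^ j + k = 0 → x = μ' ∨ x = μ := by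
  have h0 : (0 : ℝ) ^ (j + 1) - Q * 0 ^ j + k = k := by simp [hj]
  have hQ1 : (Q - 1) ^ (j + 1) - Q * (Q - 1) ^ j + k = k - (Q - 1) ^ j := by ring
  have hQQ : Q ^ (j + 1) - Q * Q ^ j + k = k := by ring
  obtain ⟨μ', μ, h⟩ := exists_two_zeros_of_strictAntiOn_of_strictMonoOn (by fun_prop)
    (strictAntiOn_pow_succ_sub_mul_pow Q k j) (strictMonoOn_pow_succ_sub_mul_pow Q k j (by linarith))
    (by linarith : (0 : ℝ) < Q - 1) (by linarith : Q - 1 < Q)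
    (by simp only [h0, hk]) (by simp only [hQ1]; linarith) (by simp only [hQQ, hk])
  exact ⟨μ', μ, h.1, h.2.1, h.2.2.1, h.2.2.2.1, h.2.2.2.2.1, h.2.2.2.2.2.1,
    fun x hx => h.2.2.2.2.2.2 x hx.le⟩

end PowSuccSubMulPow

/-- For `q ≤ 2`, `Real.log (q - 1)` is `log (-1) = log 0 = log 1 = 0`, so the bound reads
`m < n - 1`. -/
theorem two_lt_of_log_bound {q n m : ℕ} (hnm : n ≤ m)
    (hm : (m : ℝ) < ((n : ℝ) - 1) +
      ((n : ℝ) - 1) * log ((q : ℝ) - 1) / (log (q : ℝ) - log ((q : ℝ) - 1))) :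
    2 < q := by
  by_contra! hq
  have hlog : log ((q : ℝ) - 1) = 0 := by interval_cases q <;> norm_num
  have hnm' : (n : ℝ) ≤ m := by exact_mod_cast hnm
  rw [hlog] at hm
  norm_num at hm
  linarith

theorem pow_lt_pow_of_log_bound {Q : ℝ} (hQ : 2 < Q) {n m : ℕ} (hnm : n ≤ m)
    (hm : (m : ℝ) < ((n : ℝ) - 1) + ((n : ℝ) - 1) * log (Q - 1) / (log Q - log (Q - 1))) :
    Q ^ (m - n + 1) < (Q - 1) ^ m := by
  have hD : 0 < log Q - log (Q - 1) := sub_pos.2 (log_lt_log (by linarith) (by linarith))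
  rw [← sub_lt_iff_lt_add', lt_div_iff₀ hD] at hm
  have hlog : ((m - n + 1 : ℕ) : ℝ) * log Q < m * log (Q - 1) := by
    push_cast [hnm]
    linarith
  rw [← log_lt_log_iff (by positivity) (pow_pos (by linarith) m),
    log_pow, log_pow]
  exact hlog

theorem stmt_1_general (q n m : ℕ) (hnm : n ≤ m)
    (hm : (m : ℝ) < ((n : ℝ) - 1) +
      ((n : ℝ) - 1) * Real.log ((q : ℝ) - 1) /
        (Real.log (q : ℝ) - Real.log ((q : ℝ) - 1))) :
    ∃ μ' μ : ℝ, 0 < μ' ∧ μ' < (q : ℝ) - 1 ∧ (q : ℝ) - 1 < μ ∧ μ < q ∧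
      (μ' ^ m - (q : ℝ) * μ' ^ (m - 1) + (q : ℝ) ^ (m - n) = 0) ∧
      (μ ^ m - (q : ℝ) * μ ^ (m - 1) + (q : ℝ) ^ (m - n) = 0) ∧
      (∀ x : ℝ, 0 < x → x ^ m - (q : ℝ) * x ^ (m - 1) + (q : ℝ) ^ (m - n) = 0 →
        x = μ' ∨ x = μ) := by
  have hq2 : (2 : ℝ) < q := by exact_mod_cast two_lt_of_log_bound hnm hm
  have hpow := pow_lt_pow_of_log_bound hq2 hnm hm
  obtain _ | j := m
  · rw [zero_tsub, zero_add, pow_one, pow_zero] at hpow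
    linarith
  rw [pow_succ, pow_succ] at hpow
  have hk : (q : ℝ) ^ (j + 1 - n) < ((q : ℝ) - 1) ^ j :=
    lt_of_mul_lt_mul_right (hpow.trans (mul_lt_mul_of_pos_left (by linarith)
      (pow_pos (by linarith) j))) (by positivity)
  have hj : j ≠ 0 := by
    rintro rfl
    exact (one_le_pow₀ (by linarith : (1 : ℝ) ≤ q)).not_gt (by simpa using hk)
  simpa using exists_two_pos_roots_pow_succ_sub_mul_pow _ _ j hj (by linarith)
    (by positivity) hk

/-- For integers `q ≥ 2`, `n ≥ 2` and `n ≤ m` with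
`m < (n-1) + (n-1)·ln(q-1)/(ln q - ln(q-1))`, the polynomial
`p(X) = X^m - q·X^{m-1} + q^{m-n}` has exactly two positive real roots:
one in `(0, q-1)` and one in `(q-1, q)`. -/
theorem stmt_1 (q n m : ℕ) (hq : 2 ≤ q) (hn : 2 ≤ n) (hnm : n ≤ m)
    (hm : (m : ℝ) < ((n : ℝ) - 1) +
      ((n : ℝ) - 1) * Real.log ((q : ℝ) - 1) /
        (Real.log (q : ℝ) - Real.log ((q : ℝ) - 1))) :
    ∃ μ' μ : ℝ, 0 < μ' ∧ μ' < (q : ℝ) - 1 ∧ (q : ℝ) - 1 < μ ∧ μ < q ∧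
      (μ' ^ m - (q : ℝ) * μ' ^ (m - 1) + (q : ℝ) ^ (m - n) = 0) ∧
      (μ ^ m - (q : ℝ) * μ ^ (m - 1) + (q : ℝ) ^ (m - n) = 0) ∧
      (∀ x : ℝ, 0 < x → x ^ m - (q : ℝ) * x ^ (m - 1) + (q : ℝ) ^ (m - n) = 0 →
        x = μ' ∨ x = μ) :=
  stmt_1_general q n m hnm hm
end

section
/- Let q ≥ 2 and n ≥ 2 be integers and let m be an integer with n ≤ m and m < (n−1) + (n−1)·ln(q−1)/(ln q − ln(q−1)). Let μ_m be the unique real root of X^m − q·X^{m−1} + q^{m−n} in the interval (q−1, q), and let μ_{m+1} be the unique real root of X^{m+1} − q·X^m + q^{m+1−n} in (q−1, q). Then μ_{m+1} < μ_m, and consequently −ln(μ_m/q) < −ln(μ_{m+1}/q). -/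
/-!
Put `g(x) = x^{m+1} - q x^m + q^{m+1-n}`. Multiplying the equation for `μ_m` by `μ_m` gives
`g(μ_m) = q^{m-n} (q - μ_m) > 0`, while `g(q-1) = q^{m+1-n} - (q-1)^m`, which is negative exactly
when `m` satisfies the logarithmic bound. So `g` has a root in `(q-1, μ_m)`, which by uniqueness
is `μ_{m+1}`.
-/

open Real Set

lemma pow_sub_lt_pow_of_lt_add_mul_log_div {a b : ℝ} (ha : 0 < a) (hab : a < b) {k m : ℕ}
    (hkm : k ≤ m) (h : (m : ℝ) < k + k * log a / (log b - log a)) :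
    b ^ (m - k) < a ^ m := by
  have hD : 0 < log b - log a := sub_pos.mpr (log_lt_log ha hab)
  have hlog : ((m : ℝ) - k) * (log b - log a) < k * log a :=
    (lt_div_iff₀ hD).mp (by linarith)
  rw [← log_lt_log_iff (pow_pos (ha.trans hab) _) (pow_pos ha _), log_pow, log_pow,
    Nat.cast_sub hkm]
  linarith

lemma pow_succ_sub_mul_pow_add_mul_eq_of_root {q c μ : ℝ} {m : ℕ} (hm : m ≠ 0)
    (h : μ ^ m - q * μ ^ (m - 1) + c = 0) :
    μ ^ (m + 1) - q * μ ^ m + c * q = c * (q - μ) := by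
  obtain ⟨k, rfl⟩ : ∃ k, m = k + 1 := ⟨m - 1, by omega⟩
  rw [Nat.add_sub_cancel] at h
  linear_combination μ * h

lemma exists_root_pow_succ_mem_Ioo {q c μ : ℝ} {m : ℕ} (hm : m ≠ 0) (hc : 0 < c)
    (hcq : c * q < (q - 1) ^ m) (hμ : q - 1 < μ) (hμq : μ < q)
    (h : μ ^ m - q * μ ^ (m - 1) + c = 0) :
    ∃ x ∈ Ioo (q - 1) μ, x ^ (m + 1) - q * x ^ m + c * q = 0 := by
  set g : ℝ → ℝ := fun x => x ^ (m + 1) - q * x ^ m + c * q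
  have hg_left : g (q - 1) < 0 := by
    have : g (q - 1) = c * q - (q - 1) ^ m := by simp only [g]; ring
    linarith
  have hg_right : 0 < g μ := by
    simp only [g, pow_succ_sub_mul_pow_add_mul_eq_of_root hm h]
    exact mul_pos hc (sub_pos.mpr hμq)
  exact intermediate_value_Ioo hμ.le (by fun_prop) ⟨hg_left, hg_right⟩

theorem stmt_2_general (q n m : ℕ) (hq : 2 ≤ q) (hn : 2 ≤ n) (hnm : n ≤ m)
    (hm : (m : ℝ) < ((n : ℝ) - 1) +
      ((n : ℝ) - 1) * Real.log ((q : ℝ) - 1) /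
        (Real.log (q : ℝ) - Real.log ((q : ℝ) - 1)))
    (μm μm1 : ℝ)
    (hμm_mem : (q : ℝ) - 1 < μm ∧ μm < q)
    (hμm_root : μm ^ m - (q : ℝ) * μm ^ (m - 1) + (q : ℝ) ^ (m - n) = 0)
    (hμm1_uniq : ∀ x : ℝ, (q : ℝ) - 1 < x → x < q →
      x ^ (m + 1) - (q : ℝ) * x ^ m + (q : ℝ) ^ (m + 1 - n) = 0 → x = μm1) :
    μm1 < μm ∧ -Real.log (μm / q) < -Real.log (μm1 / q) := by
  have hq1 : (1 : ℝ) ≤ q - 1 := by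
    have : (2 : ℝ) ≤ q := by exact_mod_cast hq
    linarith
  have hexp : m + 1 - n = m - n + 1 := by omega
  have hlt : (q : ℝ) ^ (m - n) * q < ((q : ℝ) - 1) ^ m := by
    rw [← pow_succ, ← hexp, show m + 1 - n = m - (n - 1) by omega]
    refine pow_sub_lt_pow_of_lt_add_mul_log_div (by linarith) (by linarith) (by omega) ?_
    rwa [Nat.cast_sub (by omega), Nat.cast_one]
  obtain ⟨x, ⟨hx_gt, hx_lt⟩, hx_root⟩ := exists_root_pow_succ_mem_Ioo (by omega)
    (pow_pos (by linarith) _) hlt hμm_mem.1 hμm_mem.2 hμm_root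
  rw [← pow_succ, ← hexp] at hx_root
  obtain rfl := hμm1_uniq x hx_gt (hx_lt.trans hμm_mem.2) hx_root
  have hq0 : (0 : ℝ) < q := by linarith
  refine ⟨hx_lt, neg_lt_neg (log_lt_log (div_pos (by linarith) hq0) ?_)⟩
  gcongr

/-- If `μ_m` is the unique real root of `X^m - q·X^{m-1} + q^{m-n}` in `(q-1, q)`
and `μ_{m+1}` is the unique real root of `X^{m+1} - q·X^m + q^{m+1-n}` in `(q-1, q)`,
then `μ_{m+1} < μ_m`, and hence `-ln(μ_m/q) < -ln(μ_{m+1}/q)`. -/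
theorem stmt_2 (q n m : ℕ) (hq : 2 ≤ q) (hn : 2 ≤ n) (hnm : n ≤ m)
    (hm : (m : ℝ) < ((n : ℝ) - 1) +
      ((n : ℝ) - 1) * Real.log ((q : ℝ) - 1) /
        (Real.log (q : ℝ) - Real.log ((q : ℝ) - 1)))
    (μm μm1 : ℝ)
    (hμm_mem : (q : ℝ) - 1 < μm ∧ μm < q)
    (hμm_root : μm ^ m - (q : ℝ) * μm ^ (m - 1) + (q : ℝ) ^ (m - n) = 0)
    (hμm_uniq : ∀ x : ℝ, (q : ℝ) - 1 < x → x < q →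
      x ^ m - (q : ℝ) * x ^ (m - 1) + (q : ℝ) ^ (m - n) = 0 → x = μm)
    (hμm1_mem : (q : ℝ) - 1 < μm1 ∧ μm1 < q)
    (hμm1_root : μm1 ^ (m + 1) - (q : ℝ) * μm1 ^ m + (q : ℝ) ^ (m + 1 - n) = 0)
    (hμm1_uniq : ∀ x : ℝ, (q : ℝ) - 1 < x → x < q →
      x ^ (m + 1) - (q : ℝ) * x ^ m + (q : ℝ) ^ (m + 1 - n) = 0 → x = μm1) :
    μm1 < μm ∧ -Real.log (μm / q) < -Real.log (μm1 / q) :=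
  stmt_2_general q n m hq hn hnm hm μm μm1 hμm_mem hμm_root hμm1_uniq
end

section
/- Let K be a field, let k be a positive integer, let M be an invertible k×k matrix over K, and let t, c, F ∈ K and G : Fin k → K. Suppose that (t − c)·F + t·(∑_{i} G i) = t and that for every index i one has F = t·(∑_{j} M i j · G j). Then F·((t − c) + a) = t, where a = ∑_{i,j} (M⁻¹) i j is the sum of all entries of the inverse matrix of M. -/
/-! The second hypothesis says `M *ᵥ (t • G)` is the constant vector `F`, so `t • G = F • M⁻¹ *ᵥ 1`;
summing entries gives `t * ∑ G = F * a`, which turns the first hypothesis into the claim. -/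

open Matrix

theorem Matrix.sum_eq_mul_sum_inv_of_mulVec_eq_const {n R : Type*} [Fintype n] [DecidableEq n]
    [CommRing R] {M : Matrix n n R} (hM : IsUnit M.det) {v : n → R} {x : R}
    (h : M *ᵥ v = Function.const n x) :
    ∑ i, v i = x * ∑ i, ∑ j, M⁻¹ i j := by
  have hv : v = M⁻¹ *ᵥ Function.const n x := by
    rw [← h, mulVec_mulVec, nonsing_inv_mul M hM, one_mulVec]
  simp only [hv, mulVec, dotProduct, Function.const_apply, Finset.sum_mul, mul_comm x]

theorem stmt_4_general (K : Type*) [Field K] (k : ℕ)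
    (M : Matrix (Fin k) (Fin k) K) (hM : IsUnit M.det)
    (t c F : K) (G : Fin k → K)
    (h1 : (t - c) * F + t * (∑ i, G i) = t)
    (h2 : ∀ i, F = t * ∑ j, M i j * G j) :
    F * ((t - c) + ∑ i, ∑ j, M⁻¹ i j) = t := by
  have hMG : M *ᵥ (t • G) = Function.const (Fin k) F := by
    ext i
    rw [mulVec_smul, Pi.smul_apply, smul_eq_mul, Function.const_apply, h2 i]
    rfl
  have hsum := sum_eq_mul_sum_inv_of_mulVec_eq_const hM hMG
  simp only [Pi.smul_apply, smul_eq_mul, ← Finset.mul_sum] at hsum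
  rw [mul_add, ← hsum, mul_comm F, h1]

/-- Linear-algebra content of the formula `F(z) = z/((z-q) + a(z))`:
if `(t-c)·F + t·∑ᵢ Gᵢ = t` and `F = t·∑ⱼ Mᵢⱼ·Gⱼ` for every `i`, with `M`
invertible, then `F·((t-c) + a) = t` where `a` is the sum of the entries of
`M⁻¹`. -/
theorem stmt_4 (K : Type*) [Field K] (k : ℕ) (hk : 0 < k)
    (M : Matrix (Fin k) (Fin k) K) (hM : IsUnit M.det)
    (t c F : K) (G : Fin k → K)
    (h1 : (t - c) * F + t * (∑ i, G i) = t)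
    (h2 : ∀ i, F = t * ∑ j, M i j * G j) :
    F * ((t - c) + ∑ i, ∑ j, M⁻¹ i j) = t :=
  stmt_4_general K k M hM t c F G h1 h2
end

section
/- Let q ≥ 2 and m ≥ 1 be integers, and let S be the set of words w : Fin m → Fin q such that w(m−1) = q−1 and w(i) ≠ q−1 for all i < m−1. Then S has exactly (q−1)^{m−1} elements, and for all u, v ∈ S (including u = v) and every integer ℓ with 1 ≤ ℓ ≤ m−1, u does not overlap v at shift ℓ; that is, there exists an index j with j + ℓ ≤ m−1 such that u(j+ℓ) ≠ v(j). -/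
/-!
A word of `S` carries the letter `q - 1` exactly at its last position. If `u` overlapped `v` at
shift `ℓ ≥ 1`, the last letter of `u`, which is `q - 1`, would sit above position `m - 1 - ℓ` of
`v`, where `v` has no `q - 1`. Since the letters of a word of `S` are constrained independently,
`S` is a box: one choice for the last letter and `q - 1` choices for each of the others.
-/

def Overlaps {α : Type*} {m : ℕ} (u v : Fin m → α) (ℓ : ℕ) : Prop :=
  ∀ j k : Fin m, (k : ℕ) = j + ℓ → u k = v j

def lastMarkedWords {α : Type*} (m : ℕ) (c : α) : Set (Fin m → α) :=
  {w | ∀ i : Fin m, w i = c ↔ (i : ℕ) = m - 1}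

section lastMarkedWords

variable {α : Type*} {m : ℕ} {c : α}

theorem not_overlaps_of_mem_lastMarkedWords {u v : Fin m → α}
    (hu : u ∈ lastMarkedWords m c) (hv : v ∈ lastMarkedWords m c) {ℓ : ℕ}
    (hℓ : 1 ≤ ℓ) (hℓm : ℓ ≤ m - 1) : ¬ Overlaps u v ℓ := by
  intro huv
  have hlast : u ⟨m - 1, by omega⟩ = c := (hu _).2 rfl
  have hshift : v ⟨m - 1 - ℓ, by omega⟩ ≠ c := fun h => by
    have : m - 1 - ℓ = m - 1 := (hv _).1 h
    omega
  exact hshift (huv ⟨m - 1 - ℓ, by omega⟩ ⟨m - 1, by omega⟩ (by dsimp only; omega) ▸ hlast)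

theorem prod_ite_eq_last {M : Type*} [CommMonoid M] (m : ℕ) (x : M) :
    ∏ i : Fin m, (if (i : ℕ) = m - 1 then 1 else x) = x ^ (m - 1) := by
  cases m with
  | zero => simp
  | succ n => simp [Fin.prod_univ_castSucc, fun i : Fin n => i.is_lt.ne]

variable [Fintype α] [DecidableEq α]

theorem lastMarkedWords_eq_piFinset (m : ℕ) (c : α) :
    lastMarkedWords m c =
      ↑(Fintype.piFinset fun i : Fin m => if (i : ℕ) = m - 1 then {c} else ({c}ᶜ : Finset α)) := by
  ext w
  simp only [lastMarkedWords, Set.mem_ofPred_eq, Finset.mem_coe, Fintype.mem_piFinset]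
  refine forall_congr' fun i => ?_
  split_ifs with hi <;> simp [hi]

theorem card_lastMarkedWords (m : ℕ) (c : α) :
    Nat.card (lastMarkedWords m c) = (Fintype.card α - 1) ^ (m - 1) := by
  rw [lastMarkedWords_eq_piFinset, Nat.card_coe_set_eq, Set.ncard_coe_finset,
    Fintype.card_piFinset, ← prod_ite_eq_last]
  refine Finset.prod_congr rfl fun i _ => ?_
  split_ifs <;> simp [Finset.card_compl]

end lastMarkedWords

theorem stmt_5_general (q m : ℕ) (hq : 2 ≤ q)
    (S : Set (Fin m → Fin q))
    (hS : S = {w : Fin m → Fin q |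
      (∀ i : Fin m, (i : ℕ) = m - 1 → (w i : ℕ) = q - 1) ∧
      (∀ i : Fin m, (i : ℕ) < m - 1 → (w i : ℕ) ≠ q - 1)}) :
    Nat.card S = (q - 1) ^ (m - 1) ∧
    ∀ u ∈ S, ∀ v ∈ S, ∀ ℓ : ℕ, 1 ≤ ℓ → ℓ ≤ m - 1 →
      ∃ j k : Fin m, (k : ℕ) = (j : ℕ) + ℓ ∧ u k ≠ v j := by
  have hS' : S = lastMarkedWords m (⟨q - 1, by omega⟩ : Fin q) := by
    subst hS
    ext w
    simp only [lastMarkedWords, Set.mem_ofPred_eq, Fin.ext_iff]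
    refine ⟨fun ⟨hlast, hinit⟩ i => ⟨fun h => ?_, hlast i⟩, fun h =>
      ⟨fun i => (h i).2, fun i hi hw => ((h i).1 hw ▸ hi).false⟩⟩
    by_contra hi
    exact hinit i (by omega) h
  subst hS'
  refine ⟨by rw [card_lastMarkedWords, Fintype.card_fin], fun u hu v hv ℓ hℓ hℓm => ?_⟩
  simpa [Overlaps] using not_overlaps_of_mem_lastMarkedWords hu hv hℓ hℓm

/-- Construction 1: the set `S` of words of length `m` over `{0,…,q-1}` ending
in the symbol `q-1` and containing no other occurrence of `q-1` has exactly
`(q-1)^{m-1}` elements, and no word of `S` overlaps any word of `S` (itself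
included) at any shift `ℓ` with `1 ≤ ℓ ≤ m-1`. -/
theorem stmt_5 (q m : ℕ) (hq : 2 ≤ q) (hm : 1 ≤ m)
    (S : Set (Fin m → Fin q))
    (hS : S = {w : Fin m → Fin q |
      (∀ i : Fin m, (i : ℕ) = m - 1 → (w i : ℕ) = q - 1) ∧
      (∀ i : Fin m, (i : ℕ) < m - 1 → (w i : ℕ) ≠ q - 1)}) :
    Nat.card S = (q - 1) ^ (m - 1) ∧
    ∀ u ∈ S, ∀ v ∈ S, ∀ ℓ : ℕ, 1 ≤ ℓ → ℓ ≤ m - 1 →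
      ∃ j k : Fin m, (k : ℕ) = (j : ℕ) + ℓ ∧ u k ≠ v j :=
  stmt_5_general q m hq S hS
end

section
/- Let q ≥ 2 and m ≥ 2 be integers, and let S be the set of words w : Fin m → Fin q such that w(m−1) = q−1 and w(i) ≠ q−1 for all i < m−1. Then S is maximal in the following sense: for every word u : Fin m → Fin q with u ∉ S, there exist a word v ∈ S and an integer ℓ with 1 ≤ ℓ ≤ m−1 such that either u overlaps v at shift ℓ (u(j+ℓ) = v(j) for all j with j+ℓ ≤ m−1) or v overlaps u at shift ℓ (v(j+ℓ) = u(j) for all j with j+ℓ ≤ m−1). -/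
/-!
If `u` contains the marker `q-1` before its last position, let `i` be the first such position:
shifting `u` right by `m-1-i` and padding the front with `0` moves that marker to the end and
leaves no other marker, so this word `v` lies in `S` and overlaps `u`. Otherwise `u ∉ S` forces `u`
to be marker-free, and `v = (u (m-1), …, u (m-1), q-1)` lies in `S` while `u` overlaps `v` at the
largest shift `m-1`.
-/

namespace MarkerCode

variable {q m : ℕ}

def Overlaps (u v : Fin m → Fin q) (ℓ : ℕ) : Prop :=
  ∀ j k : Fin m, (k : ℕ) = (j : ℕ) + ℓ → u k = v j

def markerCode (q m : ℕ) : Set (Fin m → Fin q) :=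
  {w | (∀ i : Fin m, (i : ℕ) = m - 1 → (w i : ℕ) = q - 1) ∧
    (∀ i : Fin m, (i : ℕ) < m - 1 → (w i : ℕ) ≠ q - 1)}

theorem overlaps_sub_one_iff (hm : 0 < m) (u v : Fin m → Fin q) :
    Overlaps u v (m - 1) ↔ u ⟨m - 1, by omega⟩ = v ⟨0, hm⟩ := by
  constructor
  · exact fun h => h _ _ (by simp)
  · intro h j k hjk
    have := k.isLt
    have hj : j = ⟨0, hm⟩ := Fin.ext (by simp only; omega)
    have hk : k = ⟨m - 1, by omega⟩ := Fin.ext (by simp only; omega)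
    rwa [hj, hk]

def shiftRight (u : Fin m → Fin q) (ℓ : ℕ) (c : Fin q) : Fin m → Fin q :=
  fun k => if h : ℓ ≤ (k : ℕ) then u ⟨k - ℓ, by omega⟩ else c

theorem overlaps_shiftRight (u : Fin m → Fin q) (ℓ : ℕ) (c : Fin q) :
    Overlaps (shiftRight u ℓ c) u ℓ := by
  intro j k hjk
  simp only [shiftRight, dif_pos (show ℓ ≤ (k : ℕ) by omega)]
  congr 1
  ext
  simp only
  omega

theorem shiftRight_mem_markerCode {u : Fin m → Fin q} {i : Fin m} {c : Fin q}
    (hc : (c : ℕ) ≠ q - 1) (hui : (u i : ℕ) = q - 1)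
    (hfirst : ∀ j : Fin m, j < i → (u j : ℕ) ≠ q - 1) :
    shiftRight u (m - 1 - i) c ∈ markerCode q m := by
  refine ⟨fun k hk => ?_, fun k hk => ?_⟩
  · rw [shiftRight, dif_pos (by omega)]
    convert hui using 3
    ext
    simp only
    omega
  · unfold shiftRight
    split_ifs with h
    · exact hfirst _ (Fin.mk_lt_of_lt_val (by omega))
    · exact hc

def constSnocTop (hq : 0 < q) (a : Fin q) : Fin m → Fin q :=
  fun k => if (k : ℕ) = m - 1 then ⟨q - 1, by omega⟩ else a

theorem constSnocTop_apply_zero (hm : 2 ≤ m) (hq : 0 < q) (a : Fin q) :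
    constSnocTop (m := m) hq a ⟨0, by omega⟩ = a :=
  if_neg (by simp only; omega)

theorem constSnocTop_mem_markerCode (hq : 0 < q) {a : Fin q} (ha : (a : ℕ) ≠ q - 1) :
    constSnocTop hq a ∈ markerCode q m := by
  refine ⟨fun k hk => ?_, fun k hk => ?_⟩
  · rw [constSnocTop, if_pos hk]
  · rwa [constSnocTop, if_neg (by omega)]

end MarkerCode

open MarkerCode

/-- Maximality of Construction 1: for every word `u` of length `m` not in `S`,
there is a word `v ∈ S` and a shift `1 ≤ ℓ ≤ m-1` at which `u` overlaps `v`
or `v` overlaps `u`. -/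
theorem stmt_6 (q m : ℕ) (hq : 2 ≤ q) (hm : 2 ≤ m)
    (S : Set (Fin m → Fin q))
    (hS : S = {w : Fin m → Fin q |
      (∀ i : Fin m, (i : ℕ) = m - 1 → (w i : ℕ) = q - 1) ∧
      (∀ i : Fin m, (i : ℕ) < m - 1 → (w i : ℕ) ≠ q - 1)}) :
    ∀ u : Fin m → Fin q, u ∉ S →
      ∃ v ∈ S, ∃ ℓ : ℕ, 1 ≤ ℓ ∧ ℓ ≤ m - 1 ∧
        ((∀ j k : Fin m, (k : ℕ) = (j : ℕ) + ℓ → u k = v j) ∨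
         (∀ j k : Fin m, (k : ℕ) = (j : ℕ) + ℓ → v k = u j)) := by
  subst hS
  intro u hu
  by_cases hearly : ∃ i : Fin m, (i : ℕ) < m - 1 ∧ (u i : ℕ) = q - 1
  · obtain ⟨i, ⟨hi, hui⟩, hfirst⟩ := wellFounded_lt.has_min _ hearly
    have hc : ((⟨0, by omega⟩ : Fin q) : ℕ) ≠ q - 1 := by simp only; omega
    exact ⟨_, shiftRight_mem_markerCode hc hui fun j hj hju => hfirst j ⟨by omega, hju⟩ hj,
      m - 1 - i, by omega, by omega, Or.inr (overlaps_shiftRight _ _ _)⟩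
  · push Not at hearly
    have hlast : (u ⟨m - 1, by omega⟩ : ℕ) ≠ q - 1 := fun h =>
      hu ⟨fun k hk => by rwa [show k = ⟨m - 1, by omega⟩ from Fin.ext hk], hearly⟩
    exact ⟨_, constSnocTop_mem_markerCode (by omega) hlast, m - 1, by omega, le_rfl,
      Or.inl ((overlaps_sub_one_iff (by omega) _ _).2 (constSnocTop_apply_zero hm _ _).symm)⟩
end

section
/- Let q ≥ 2 and m ≥ 2 be integers, let I be a nonempty proper subset of Fin q with ℓ elements (so 1 ≤ ℓ ≤ q−1), and let r be an integer with 1 ≤ r < m. Let S be the set of words x : Fin m → Fin q such that x(j) ∉ I for all j < m−r and x(j) ∈ I for all j with m−r ≤ j ≤ m−1. Then S has exactly (q−ℓ)^{m−r}·ℓ^r elements, and for all u, v ∈ S (including u = v) and every integer s with 1 ≤ s ≤ m−1, u does not overlap v at shift s; that is, there exists an index j with j + s ≤ m−1 such that u(j+s) ≠ v(j). -/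
open Finset

lemma Fin.card_filter_val_not_lt {m n : ℕ} : #{j : Fin m | ¬ (j : ℕ) < n} = m - min m n := by
  rw [filter_not, card_sdiff_of_subset (filter_subset _ _), Fin.card_filter_val_lt, card_univ,
    Fintype.card_fin]

theorem card_words_prefix_notMem_suffix_mem {α : Type*} [Fintype α] [DecidableEq α]
    (I : Finset α) {m n : ℕ} (hn : n ≤ m) :
    Nat.card {x : Fin m → α |
      (∀ j : Fin m, (j : ℕ) < n → x j ∉ I) ∧ (∀ j : Fin m, n ≤ (j : ℕ) → x j ∈ I)} =
      (Fintype.card α - #I) ^ n * #I ^ (m - n) := by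
  have hpi : {x : Fin m → α |
      (∀ j : Fin m, (j : ℕ) < n → x j ∉ I) ∧ (∀ j : Fin m, n ≤ (j : ℕ) → x j ∈ I)} =
      ↑(Fintype.piFinset fun j : Fin m => if (j : ℕ) < n then Iᶜ else I) := by
    ext x
    simp only [Set.mem_ofPred_eq, Finset.mem_coe, Fintype.mem_piFinset]
    refine ⟨fun ⟨hlt, hge⟩ j => ?_, fun h => ⟨fun j hj => ?_, fun j hj => ?_⟩⟩
    · split_ifs with hj
      · simpa using hlt j hj
      · exact hge j (not_lt.mp hj)
    · simpa [hj] using h j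
    · simpa [not_lt.mpr hj] using h j
  rw [hpi, Nat.card_coe_set_eq, Set.ncard_coe_finset, Fintype.card_piFinset]
  simp only [apply_ite card, card_compl]
  rw [prod_ite, prod_const, prod_const, Fin.card_filter_val_lt, Fin.card_filter_val_not_lt,
    min_eq_right hn]

theorem exists_shift_mismatch_of_prefix_notMem_suffix_mem {α : Type*} {I : Set α}
    {m n s : ℕ} {u v : Fin m → α} (hu : ∀ j : Fin m, n ≤ (j : ℕ) → u j ∈ I)
    (hv : ∀ j : Fin m, (j : ℕ) < n → v j ∉ I) (hn : 0 < n) (hnm : n < m)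
    (hs : 0 < s) (hsm : s < m) :
    ∃ j k : Fin m, (k : ℕ) = (j : ℕ) + s ∧ u k ≠ v j := by
  -- `k = max s n` is in the suffix, while `j = k - s` is in the prefix.
  refine ⟨⟨max s n - s, by omega⟩, ⟨max s n, max_lt hsm hnm⟩,
    (Nat.sub_add_cancel (le_max_left s n)).symm, fun h => ?_⟩
  exact hv _ (by rw [Fin.val_mk]; omega) (h ▸ hu _ (le_max_right s n))

theorem stmt_7_general (q m r : ℕ)
    (I : Finset (Fin q))
    (hr1 : 1 ≤ r) (hrm : r < m)
    (S : Set (Fin m → Fin q))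
    (hS : S = {x : Fin m → Fin q |
      (∀ j : Fin m, (j : ℕ) < m - r → x j ∉ I) ∧
      (∀ j : Fin m, m - r ≤ (j : ℕ) → x j ∈ I)}) :
    Nat.card S = (q - I.card) ^ (m - r) * I.card ^ r ∧
    ∀ u ∈ S, ∀ v ∈ S, ∀ s : ℕ, 1 ≤ s → s ≤ m - 1 →
      ∃ j k : Fin m, (k : ℕ) = (j : ℕ) + s ∧ u k ≠ v j := by
  subst hS
  refine ⟨?_, fun u hu v hv s hs1 hs2 => ?_⟩
  · rw [card_words_prefix_notMem_suffix_mem I (Nat.sub_le m r), Fintype.card_fin,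
      Nat.sub_sub_self hrm.le]
  · exact exists_shift_mismatch_of_prefix_notMem_suffix_mem hu.2 hv.1 (by omega) (by omega)
      hs1 (by omega)

/-- Construction 3: given a nonempty proper subset `I` of the alphabet `Fin q`
and `1 ≤ r < m`, the set `S` of words whose first `m-r` letters avoid `I` and
whose last `r` letters lie in `I` has exactly `(q-ℓ)^{m-r}·ℓ^r` elements
(`ℓ = #I`), and no word of `S` overlaps any word of `S` at any shift
`1 ≤ s ≤ m-1`. -/
theorem stmt_7 (q m r : ℕ) (hq : 2 ≤ q) (hm : 2 ≤ m)
    (I : Finset (Fin q)) (hI : I.Nonempty) (hIproper : I ≠ Finset.univ)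
    (hr1 : 1 ≤ r) (hrm : r < m)
    (S : Set (Fin m → Fin q))
    (hS : S = {x : Fin m → Fin q |
      (∀ j : Fin m, (j : ℕ) < m - r → x j ∉ I) ∧
      (∀ j : Fin m, m - r ≤ (j : ℕ) → x j ∈ I)}) :
    Nat.card S = (q - I.card) ^ (m - r) * I.card ^ r ∧
    ∀ u ∈ S, ∀ v ∈ S, ∀ s : ℕ, 1 ≤ s → s ≤ m - 1 →
      ∃ j k : Fin m, (k : ℕ) = (j : ℕ) + s ∧ u k ≠ v j :=
  stmt_7_general q m r I hr1 hrm S hS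
end

section
/- Let q ≥ 2 and n ≥ 1 be integers, let G be a finite set of words w : Fin n → Fin q, let μ be the infinite product probability measure on X = (ℕ → Fin q) whose every factor is the uniform probability measure on Fin q, let σ : X → X be the left shift σ(x)(i) = x(i+1), and let H = {x ∈ X : ∃ w ∈ G, ∀ i : Fin n, x(i) = w(i)} be the union of cylinders based at the words of G. For r ∈ ℕ let f(r) denote the number of words u : Fin r → Fin q containing no occurrence of any word of G, and assume f(r) > 0 for all r and that (1/m)·ln f(m) converges to a real number h as m → ∞. Then −(1/m)·ln μ(X \ ⋃_{j=0}^{m} σ^{−j} H) converges to ln q − h as m → ∞; that is, the escape rate into H equals ln q − h. -/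
open MeasureTheory Filter

/-!
A point survives the first `m` steps of the shift exactly when its first `m + n` letters form a
word avoiding `G`, so the survivor set is a disjoint union of `f (m + n)` cylinders of length
`m + n`, each of measure `q^{-(m+n)}`. Hence `-(1/m) ln μ(survivors) = ((m+n) ln q - ln f(m+n))/m`,
and the shift by `n` does not change the limit of `ln f(m)/m`.
-/

section Words

variable {α : Type*}

def initialWord (r : ℕ) (x : ℕ → α) : Fin r → α := fun i => x i

def avoidingWords {n : ℕ} (G : Set (Fin n → α)) (r : ℕ) : Set (Fin r → α) :=
  {u | ¬ ∃ j : ℕ, j + n ≤ r ∧ ∃ w ∈ G, ∀ (i : Fin n) (k : Fin r),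
    (k : ℕ) = j + (i : ℕ) → u k = w i}

theorem initialWord_preimage_singleton (r : ℕ) (w : Fin r → α) :
    initialWord r ⁻¹' {w} = {x : ℕ → α | ∀ i : Fin r, x i = w i} := by
  ext x
  simp [initialWord, funext_iff]

theorem iterate_apply_of_shift {σ : (ℕ → α) → (ℕ → α)} (hσ : ∀ x i, σ x i = x (i + 1))
    (j : ℕ) (x : ℕ → α) (i : ℕ) : σ^[j] x i = x (i + j) := by
  induction j generalizing x with
  | zero => rfl
  | succ j ih => rw [Function.iterate_succ_apply, ih, hσ, Nat.add_assoc]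

theorem forall_iterate_not_mem_iff {σ : (ℕ → α) → (ℕ → α)} (hσ : ∀ x i, σ x i = x (i + 1))
    {n : ℕ} (G : Set (Fin n → α)) (m : ℕ) (x : ℕ → α) :
    (∀ j ≤ m, σ^[j] x ∉ {y : ℕ → α | ∃ w ∈ G, ∀ i : Fin n, y i = w i}) ↔
      initialWord (m + n) x ∈ avoidingWords G (m + n) := by
  simp only [avoidingWords, initialWord, Set.mem_ofPred_eq, iterate_apply_of_shift hσ]
  constructor
  · rintro hx ⟨j, hj, w, hw, hocc⟩
    exact hx j (by omega) ⟨w, hw, fun i => by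
      rw [← hocc i ⟨j + i, by omega⟩ rfl, Nat.add_comm]⟩
  · rintro hx j hj ⟨w, hw, hocc⟩
    exact hx ⟨j, by omega, w, hw, fun i k hk => by rw [← hocc i, hk, Nat.add_comm]⟩

theorem measure_initialWord_preimage [Finite α] [MeasurableSpace α]
    [MeasurableSingletonClass α] (μ : Measure (ℕ → α)) (r : ℕ) (c : ENNReal)
    (hμ : ∀ w : Fin r → α, μ (initialWord r ⁻¹' {w}) = c) (S : Set (Fin r → α)) :
    μ (initialWord r ⁻¹' S) = Nat.card S * c := by
  have : Fintype S := Fintype.ofFinite S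
  have hmeas : Measurable (initialWord r : (ℕ → α) → Fin r → α) :=
    measurable_pi_lambda _ fun i => measurable_pi_apply _
  rw [← Set.coe_toFinset S, ← sum_measure_preimage_singleton _
      fun w _ => hmeas (measurableSet_singleton w)]
  simp [hμ]

end Words

theorem tendsto_shift_div_atTop {u : ℕ → ℝ} {h : ℝ}
    (hu : Tendsto (fun m : ℕ => u m / m) atTop (nhds h)) (n : ℕ) :
    Tendsto (fun m : ℕ => u (m + n) / m) atTop (nhds h) := by
  have hratio : Tendsto (fun m : ℕ => ((m + n : ℕ) : ℝ) / m) atTop (nhds 1) := by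
    simpa using (tendsto_natCast_div_add_atTop (n : ℝ)).inv₀ one_ne_zero
  have hprod : Tendsto (fun m : ℕ => u (m + n) / ((m + n : ℕ) : ℝ) * (((m + n : ℕ) : ℝ) / m))
      atTop (nhds h) := by
    simpa using (hu.comp (tendsto_add_atTop_nat n)).mul hratio
  refine hprod.congr' ?_
  filter_upwards [eventually_gt_atTop 0] with m hm
  have : ((m + n : ℕ) : ℝ) ≠ 0 := by positivity
  exact div_mul_div_cancel₀ this

theorem stmt_11_general (q n : ℕ) (hq : 2 ≤ q)
    (G : Finset (Fin n → Fin q))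
    (μ : Measure (ℕ → Fin q))
    (hμ : ∀ (r : ℕ) (w : Fin r → Fin q),
      μ {x : ℕ → Fin q | ∀ i : Fin r, x (i : ℕ) = w i} = 1 / (q : ENNReal) ^ r)
    (σ : (ℕ → Fin q) → (ℕ → Fin q)) (hσ : ∀ (x : ℕ → Fin q) (i : ℕ), σ x i = x (i + 1))
    (H : Set (ℕ → Fin q))
    (hH : H = {x : ℕ → Fin q | ∃ w ∈ G, ∀ i : Fin n, x (i : ℕ) = w i})
    (f : ℕ → ℕ)
    (hf : ∀ r : ℕ, f r = Nat.card {u : Fin r → Fin q |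
      ¬ ∃ j : ℕ, j + n ≤ r ∧ ∃ w ∈ G, ∀ (i : Fin n) (k : Fin r),
        (k : ℕ) = j + (i : ℕ) → u k = w i})
    (hfpos : ∀ r : ℕ, 0 < f r)
    (h : ℝ)
    (hconv : Tendsto (fun m : ℕ => Real.log (f m) / (m : ℝ)) atTop (nhds h)) :
    Tendsto (fun m : ℕ =>
        -(1 / (m : ℝ)) * Real.log ((μ {x : ℕ → Fin q | ∀ j : ℕ, j ≤ m → σ^[j] x ∉ H}).toReal))
      atTop (nhds (Real.log q - h)) := by
  have hq0 : (q : ℝ) ≠ 0 := Nat.cast_ne_zero.mpr (by omega)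
  have hsurvive (m : ℕ) : μ {x | ∀ j ≤ m, σ^[j] x ∉ H}
      = f (m + n) * (1 / (q : ENNReal) ^ (m + n)) := by
    have hset : {x | ∀ j ≤ m, σ^[j] x ∉ H} =
        initialWord (m + n) ⁻¹' avoidingWords (G : Set (Fin n → Fin q)) (m + n) := by
      ext x
      rw [hH]
      exact forall_iterate_not_mem_iff hσ (G : Set (Fin n → Fin q)) m x
    rw [hset, measure_initialWord_preimage μ (m + n) _
      (fun w => (initialWord_preimage_singleton _ w).symm ▸ hμ _ w), hf]
    rfl
  have hdecay : Tendsto (fun m : ℕ => (m * Real.log q - Real.log (f m)) / m) atTop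
      (nhds (Real.log q - h)) := by
    refine (tendsto_const_nhds.sub hconv).congr' ?_
    filter_upwards [eventually_gt_atTop 0] with m hm
    field_simp
  refine (tendsto_shift_div_atTop hdecay n).congr fun m => ?_
  rw [hsurvive, ENNReal.toReal_mul, Real.log_mul (by simpa using (hfpos _).ne') (by simp [hq0])]
  simp [Real.log_pow]
  ring

/-- Escape rate into a union of cylinders for the full shift: if `f(m)` counts
the words of length `m` avoiding every word of `G`, `f` is positive, and
`(1/m)·ln f(m) → h`, then the escape rate into the hole `H` (the union of the
cylinders based at the words of `G`) equals `ln q - h`. -/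
theorem stmt_11 (q n : ℕ) (hq : 2 ≤ q) (hn : 1 ≤ n)
    (G : Finset (Fin n → Fin q))
    (μ : Measure (ℕ → Fin q)) [IsProbabilityMeasure μ]
    (hμ : ∀ (r : ℕ) (w : Fin r → Fin q),
      μ {x : ℕ → Fin q | ∀ i : Fin r, x (i : ℕ) = w i} = 1 / (q : ENNReal) ^ r)
    (σ : (ℕ → Fin q) → (ℕ → Fin q)) (hσ : ∀ (x : ℕ → Fin q) (i : ℕ), σ x i = x (i + 1))
    (H : Set (ℕ → Fin q))
    (hH : H = {x : ℕ → Fin q | ∃ w ∈ G, ∀ i : Fin n, x (i : ℕ) = w i})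
    (f : ℕ → ℕ)
    (hf : ∀ r : ℕ, f r = Nat.card {u : Fin r → Fin q |
      ¬ ∃ j : ℕ, j + n ≤ r ∧ ∃ w ∈ G, ∀ (i : Fin n) (k : Fin r),
        (k : ℕ) = j + (i : ℕ) → u k = w i})
    (hfpos : ∀ r : ℕ, 0 < f r)
    (h : ℝ)
    (hconv : Tendsto (fun m : ℕ => Real.log (f m) / (m : ℝ)) atTop (nhds h)) :
    Tendsto (fun m : ℕ =>
        -(1 / (m : ℝ)) * Real.log ((μ {x : ℕ → Fin q | ∀ j : ℕ, j ≤ m → σ^[j] x ∉ H}).toReal))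
      atTop (nhds (Real.log q - h)) :=
  stmt_11_general q n hq G μ hμ σ hσ H hH f hf hfpos h hconv
end

section
/- Let P be the 6×6 real matrix all of whose entries equal 1 except that P(0,0) = 0 and P(0,1) = 0. Then (5 + √41)/2 is an eigenvalue of P, and every complex eigenvalue z of P satisfies |z| ≤ (5 + √41)/2. -/
/-!
The vector `v = ((√41 - 5)/2, 1, 1, 1, 1, 1)` is a positive eigenvector of `P` for
`λ = (5 + √41)/2`: the first row of `P` sums the four entries equal to `1`, giving `4 = λ v₀`,
and every other row gives `v₀ + 5 = λ`. For a nonnegative matrix a positive vector with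
`A v ≤ r v` bounds every complex eigenvalue by `r`: if `A w = z w` with `w ≠ 0`, compare `|w|`
with `c v`, where `c = max |wⱼ|/vⱼ` is attained at `i`; then
`|z| |wᵢ| ≤ (A |w|)ᵢ ≤ c (A v)ᵢ ≤ r c vᵢ = r |wᵢ|`.
-/

open Matrix Module.End Finset

namespace Matrix

variable {n : Type*} [Fintype n]

theorem mem_spectrum_iff_exists_mulVec_eq_smul [DecidableEq n] {K : Type*} [Field K]
    {A : Matrix n n K} {μ : K} : μ ∈ spectrum K A ↔ ∃ v, v ≠ 0 ∧ A *ᵥ v = μ • v := by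
  rw [← spectrum_toLin', ← hasEigenvalue_iff_mem_spectrum]
  constructor
  · intro hμ
    obtain ⟨v, hv, hv0⟩ := hμ.exists_hasEigenvector
    exact ⟨v, hv0, by simpa using mem_eigenspace_iff.1 hv⟩
  · rintro ⟨v, hv0, hv⟩
    exact hasEigenvalue_of_hasEigenvector ⟨by simpa [mem_eigenspace_iff] using hv, hv0⟩

theorem norm_mulVec_map_ofReal_le {A : Matrix n n ℝ} (hA : ∀ i j, 0 ≤ A i j) (w : n → ℂ)
    (i : n) : ‖(A.map Complex.ofReal *ᵥ w) i‖ ≤ (A *ᵥ fun j ↦ ‖w j‖) i := by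
  simp only [mulVec, dotProduct, map_apply]
  refine (norm_sum_le _ _).trans_eq (sum_congr rfl fun j _ ↦ ?_)
  rw [norm_mul, Complex.norm_real, Real.norm_of_nonneg (hA i j)]

theorem mulVec_mono_of_nonneg {A : Matrix n n ℝ} (hA : ∀ i j, 0 ≤ A i j) {v w : n → ℝ}
    (hvw : v ≤ w) : A *ᵥ v ≤ A *ᵥ w := fun i ↦
  sum_le_sum fun j _ ↦ mul_le_mul_of_nonneg_left (hvw j) (hA i j)

theorem norm_le_of_mulVec_le_smul [DecidableEq n] {A : Matrix n n ℝ} (hA : ∀ i j, 0 ≤ A i j)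
    {v : n → ℝ} (hv : ∀ i, 0 < v i) {r : ℝ} (hAv : A *ᵥ v ≤ r • v) {z : ℂ}
    (hz : z ∈ spectrum ℂ (A.map Complex.ofReal)) : ‖z‖ ≤ r := by
  obtain ⟨w, hw0, hw⟩ := mem_spectrum_iff_exists_mulVec_eq_smul.1 hz
  obtain ⟨k, hk⟩ := Function.ne_iff.1 hw0
  obtain ⟨i, -, hi⟩ := exists_max_image univ (fun j ↦ ‖w j‖ / v j) ⟨k, mem_univ k⟩
  set c := ‖w i‖ / v i
  have hwc : (fun j ↦ ‖w j‖) ≤ c • v := fun j ↦ (div_le_iff₀ (hv j)).1 (hi j (mem_univ j))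
  have hc : 0 < c := (div_pos (norm_pos_iff.2 hk) (hv k)).trans_le (hi k (mem_univ k))
  have hwi : ‖w i‖ = c * v i := (div_mul_cancel₀ _ (hv i).ne').symm
  have key : ‖z‖ * (c * v i) ≤ r * (c * v i) :=
    calc ‖z‖ * (c * v i) = ‖(A.map Complex.ofReal *ᵥ w) i‖ := by simp [hw, hwi]
      _ ≤ (A *ᵥ fun j ↦ ‖w j‖) i := norm_mulVec_map_ofReal_le hA w i
      _ ≤ (A *ᵥ c • v) i := mulVec_mono_of_nonneg hA hwc i
      _ = c * (A *ᵥ v) i := by rw [mulVec_smul, Pi.smul_apply, smul_eq_mul]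
      _ ≤ c * (r * v i) := mul_le_mul_of_nonneg_left (hAv i) hc.le
      _ = r * (c * v i) := by ring
  exact le_of_mul_le_mul_right key (mul_pos hc (hv i))

end Matrix

theorem mulVec_perronVector (P : Matrix (Fin 6) (Fin 6) ℝ)
    (hP : ∀ i j, P i j = if i = 0 ∧ (j = 0 ∨ j = 1) then 0 else 1) :
    P *ᵥ ![(√41 - 5) / 2, 1, 1, 1, 1, 1] =
      ((5 + √41) / 2) • ![(√41 - 5) / 2, 1, 1, 1, 1, 1] := by
  have h41 : √41 ^ 2 = 41 := Real.sq_sqrt (by norm_num)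
  ext i
  fin_cases i <;> simp [mulVec, dotProduct, Fin.sum_univ_six, hP] <;> nlinarith

/-- The 6×6 transition matrix obtained from the all-ones matrix by zeroing the
entries `(0,0)` and `(0,1)` has `(5+√41)/2` as an eigenvalue, and every complex
eigenvalue has modulus at most `(5+√41)/2`. -/
theorem stmt_17 (P : Matrix (Fin 6) (Fin 6) ℝ)
    (hP : ∀ i j, P i j = if i = 0 ∧ (j = 0 ∨ j = 1) then 0 else 1) :
    ((5 + Real.sqrt 41) / 2 ∈ spectrum ℝ P) ∧
    ∀ z ∈ spectrum ℂ (P.map (Complex.ofReal)),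
      ‖z‖ ≤ (5 + Real.sqrt 41) / 2 := by
  have hv : ∀ i, 0 < ![(√41 - 5) / 2, 1, 1, 1, 1, 1] i := by
    have : 5 < √41 := Real.lt_sqrt_of_sq_lt (by norm_num)
    intro i
    fin_cases i <;> simp [this]
  have hP0 : ∀ i j, 0 ≤ P i j := fun i j ↦ by rw [hP]; split <;> norm_num
  have hPv := mulVec_perronVector P hP
  exact ⟨mem_spectrum_iff_exists_mulVec_eq_smul.2 ⟨_, fun h ↦ (hv 0).ne' (congrFun h 0), hPv⟩,
    fun z hz ↦ norm_le_of_mulVec_le_smul hP0 hv hPv.le hz⟩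
end

section
/- Let Q be the 6×6 real matrix all of whose entries equal 1 except that Q(0,4) = 0 and Q(0,5) = 0. Then 3 + √7 is an eigenvalue of Q, and every complex eigenvalue z of Q satisfies |z| ≤ 3 + √7. -/
/-!
Rows `1, …, 5` of `Q` coincide, so an eigenvector for an eigenvalue `z ≠ 0` is constant, say `c`,
on the coordinates `1, …, 5`; the two remaining eigen-equations then force
`c (z² - 6z + 2) = 0`. Hence every eigenvalue is `0` or a root `3 ± √7` of `z² - 6z + 2`, and
`(√7 - 2, 1, 1, 1, 1, 1)` is an eigenvector for `3 + √7`.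
-/

open Matrix

def forbiddenWordsMatrix (R : Type*) [Zero R] [One R] : Matrix (Fin 6) (Fin 6) R :=
  of fun i j => if i = 0 ∧ (j = 4 ∨ j = 5) then 0 else 1

theorem Matrix.mem_spectrum_iff_exists_mulVec_eq_smul_s18 {n K : Type*} [Fintype n] [DecidableEq n]
    [Field K] (A : Matrix n n K) (μ : K) :
    μ ∈ spectrum K A ↔ ∃ v ≠ 0, A *ᵥ v = μ • v := by
  rw [spectrum.mem_iff, isUnit_iff_isUnit_det, isUnit_iff_ne_zero, not_not,
    ← exists_mulVec_eq_zero_iff]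
  simp only [sub_mulVec, algebraMap_eq_diagonal, Pi.algebraMap_def, Algebra.algebraMap_self,
    RingHom.id_apply]
  simp [sub_eq_zero, eq_comm]

theorem norm_le_of_sub_sq_eq {𝕜 : Type*} [NormedDivisionRing 𝕜] {z a b : 𝕜}
    (h : (z - a) ^ 2 = b) : ‖z‖ ≤ ‖a‖ + √‖b‖ := by
  have hdist : ‖z - a‖ = √‖b‖ := by
    rw [← h, norm_pow, Real.sqrt_sq (norm_nonneg _)]
  exact hdist ▸ norm_le_norm_add_norm_sub' z a

theorem forbiddenWordsMatrix_map {R S : Type*} [Zero R] [One R] [Zero S] [One S] {f : R → S}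
    (h0 : f 0 = 0) (h1 : f 1 = 1) : (forbiddenWordsMatrix R).map f = forbiddenWordsMatrix S := by
  ext i j
  simp [forbiddenWordsMatrix, apply_ite f, h0, h1]

section mulVec

variable {R : Type*} [NonAssocSemiring R]

theorem forbiddenWordsMatrix_mulVec_zero (v : Fin 6 → R) :
    (forbiddenWordsMatrix R *ᵥ v) 0 = v 0 + v 1 + v 2 + v 3 := by
  simp [forbiddenWordsMatrix, mulVec, dotProduct, Fin.sum_univ_six]

theorem forbiddenWordsMatrix_mulVec_of_ne_zero (v : Fin 6 → R) {i : Fin 6} (hi : i ≠ 0) :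
    (forbiddenWordsMatrix R *ᵥ v) i = ∑ j, v j := by
  simp [forbiddenWordsMatrix, mulVec, dotProduct, hi]

end mulVec

theorem forbiddenWordsMatrix_eigenvalue {R : Type*} [CommRing R] [IsDomain R] {v : Fin 6 → R}
    {z : R} (hv : v ≠ 0) (h : forbiddenWordsMatrix R *ᵥ v = z • v) :
    z = 0 ∨ z ^ 2 - 6 * z + 2 = 0 := by
  have row0 : z * v 0 = v 0 + v 1 + v 2 + v 3 := by
    rw [← forbiddenWordsMatrix_mulVec_zero, h, Pi.smul_apply, smul_eq_mul]
  have row (i : Fin 6) (hi : i ≠ 0) : z * v i = ∑ j, v j := by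
    rw [← forbiddenWordsMatrix_mulVec_of_ne_zero v hi, h, Pi.smul_apply, smul_eq_mul]
  set s := ∑ j, v j with hs
  rw [Fin.sum_univ_six] at hs
  have r1 := row 1 (by decide)
  have r2 := row 2 (by decide)
  have r3 := row 3 (by decide)
  have r4 := row 4 (by decide)
  have r5 := row 5 (by decide)
  have row0' : z * v 0 = (z - 5) * s := by
    linear_combination -(z * hs + r1 + r2 + r3 + r4 + r5)
  have hps : (z ^ 2 - 6 * z + 2) * s = 0 := by
    linear_combination (z - 1) * (z * hs + r1 + r2 + r3 + r4 + r5) + z * row0 + r1 + r2 + r3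
  -- `z² (z² - 6z + 2)` kills every coordinate of `v`, without dividing by `z`.
  have annihilates (i : Fin 6) : z * (z ^ 2 - 6 * z + 2) * (z * v i) = 0 := by
    by_cases hi : i = 0
    · subst hi
      linear_combination z * (z ^ 2 - 6 * z + 2) * row0' + z * (z - 5) * hps
    · linear_combination z * (z ^ 2 - 6 * z + 2) * row i hi + z * hps
  by_contra! hz
  exact hv (funext fun i => by simpa [hz.1, hz.2] using annihilates i)

theorem forbiddenWordsMatrix_mulVec_perronVector :
    forbiddenWordsMatrix ℝ *ᵥ ![√7 - 2, 1, 1, 1, 1, 1] =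
      (3 + √7) • ![√7 - 2, 1, 1, 1, 1, 1] := by
  have h7 : √7 ^ 2 = 7 := Real.sq_sqrt (by norm_num)
  ext i
  by_cases hi : i = 0
  · subst hi
    rw [forbiddenWordsMatrix_mulVec_zero]
    simp only [Matrix.cons_val, Pi.smul_apply, smul_eq_mul]
    linear_combination -h7
  · rw [forbiddenWordsMatrix_mulVec_of_ne_zero _ hi, Fin.sum_univ_six]
    fin_cases i <;> simp at hi ⊢ <;> ring

/-- The 6×6 transition matrix obtained from the all-ones matrix by zeroing the
entries `(0,4)` and `(0,5)` has `3+√7` as an eigenvalue, and every complex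
eigenvalue has modulus at most `3+√7`. -/
theorem stmt_18 (Q : Matrix (Fin 6) (Fin 6) ℝ)
    (hQ : ∀ i j, Q i j = if i = 0 ∧ (j = 4 ∨ j = 5) then 0 else 1) :
    (3 + Real.sqrt 7 ∈ spectrum ℝ Q) ∧
    ∀ z ∈ spectrum ℂ (Q.map (Complex.ofReal)),
      ‖z‖ ≤ 3 + Real.sqrt 7 := by
  obtain rfl : Q = forbiddenWordsMatrix ℝ := Matrix.ext hQ
  refine ⟨(mem_spectrum_iff_exists_mulVec_eq_smul_s18 _ _).2
    ⟨_, fun h => by simpa using congrFun h 1, forbiddenWordsMatrix_mulVec_perronVector⟩, ?_⟩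
  intro z hz
  rw [forbiddenWordsMatrix_map Complex.ofReal_zero Complex.ofReal_one] at hz
  obtain ⟨v, hv, hzv⟩ := (mem_spectrum_iff_exists_mulVec_eq_smul_s18 _ _).1 hz
  rcases forbiddenWordsMatrix_eigenvalue hv hzv with rfl | hz
  · simp only [norm_zero]
    positivity
  · have hroot : (z - 3) ^ 2 = 7 := by linear_combination hz
    simpa using norm_le_of_sub_sq_eq hroot
end
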